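/- arXiv:0806.1752 — 3 statements merged into one kernel-verified Lean document; each statement's English description precedes it below -/
import Mathlib

section
/- Let Q : ℝ³ → ℝ be a Schwartz (smooth, rapidly decaying together with all derivatives) solution of the elliptic equation -Q + ΔQ + Q³ = 0. Then the Pohozhaev-type identities hold: ∫ Q⁴ = 4 ∫ Q² and ∫ |∇Q|² = 3 ∫ Q². -/
open MeasureTheory

noncomputable section

abbrev R3 := EuclideanSpace ℝ (Fin 3)

/-- The Laplacian of `f : ℝ³ → ℝ`, as the sum of the second partial derivatives. -/
def lap (f : R3 → ℝ) (x : R3) : ℝ :=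
  ∑ i : Fin 3, fderiv ℝ (fun y => fderiv ℝ f y (EuclideanSpace.single i 1)) x
    (EuclideanSpace.single i 1)

/-! Testing `-Q + ΔQ + Qⁿ = 0` against `Q` and integrating `Q ΔQ` by parts gives the Nehari
identity `∫ Qⁿ⁺¹ = ∫ Q² + ∫ |∇Q|²`. Testing it against the generator of dilations `x · ∇Q`
(`fderiv ℝ Q x x` below) gives the Pohozhaev identity: `(x · ∇Q) Qᵐ = x · ∇(Qᵐ⁺¹) / (m + 1)`
integrates to `-d / (m + 1) ∫ Qᵐ⁺¹`, and `∫ (x · ∇Q) ΔQ = (d / 2 - 1) ∫ |∇Q|²` after two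
integrations by parts and the symmetry of second derivatives. For `d = n = 3` these two linear
relations between `∫ Q²`, `∫ |∇Q|²` and `∫ Q⁴` force `∫ Q⁴ = 4 ∫ Q²` and `∫ |∇Q|² = 3 ∫ Q²`.
No boundary terms appear because all integrands, even after multiplication by a coordinate, are
Schwartz functions. -/

open LineDeriv Laplacian Gradient

theorem norm_gradient_sq_eq_sum {E ι : Type*} [NormedAddCommGroup E] [InnerProductSpace ℝ E]
    [CompleteSpace E] [Fintype ι] (b : OrthonormalBasis ι ℝ E) (f : E → ℝ) (x : E) :
    ‖∇ f x‖ ^ 2 = ∑ i, fderiv ℝ f x (b i) ^ 2 := by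
  simp [← b.sum_sq_inner_right]

namespace SchwartzMap

variable {D : Type*} [NormedAddCommGroup D] [NormedSpace ℝ D]

theorem lineDerivOp_comm {F : Type*} [NormedAddCommGroup F] [NormedSpace ℝ F]
    (f : 𝓢(D, F)) (v w : D) : ∂_{v} (∂_{w} f) = ∂_{w} (∂_{v} f) := by
  ext x
  have h := (((f.smooth 2).contDiffAt (x := x)).isSymmSndFDerivAt (by simp)).iteratedFDeriv_cons
    (v := v) (w := w)
  rwa [← iteratedLineDerivOp_eq_iteratedFDeriv, ← iteratedLineDerivOp_eq_iteratedFDeriv] at h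

theorem lineDerivOp_smulLeftCLM_pow_apply (f : 𝓢(D, ℝ)) (n : ℕ) (v x : D) :
    ∂_{v} (smulLeftCLM ℝ (⇑f ^ n) f) x = (n + 1) * (f x ^ n * ∂_{v} f x) := by
  have hpow : ⇑(smulLeftCLM ℝ (⇑f ^ n) f) = fun y ↦ f y ^ (n + 1) := by
    ext y
    simp [f.hasTemperateGrowth.pow n, pow_succ]
  rw [lineDerivOp_apply_eq_fderiv, hpow, ((f.hasFDerivAt x).pow (n + 1)).fderiv]
  simp only [smul_apply, nsmul_eq_mul, smul_eq_mul, Nat.cast_add, Nat.cast_one,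
    add_tsub_cancel_right, lineDerivOp_apply_eq_fderiv]
  ring

theorem lineDerivOp_pairing_mul_apply (f g : 𝓢(D, ℝ)) (v x : D) :
    ∂_{v} (pairing (ContinuousLinearMap.mul ℝ ℝ) f g) x = ∂_{v} f x * g x + f x * ∂_{v} g x := by
  have hmul : ⇑(pairing (ContinuousLinearMap.mul ℝ ℝ) f g) = fun y ↦ f y * g y := rfl
  rw [lineDerivOp_apply_eq_fderiv, hmul, ((f.hasFDerivAt x).fun_mul (g.hasFDerivAt x)).fderiv]
  simp only [add_apply, smul_apply, smul_eq_mul, lineDerivOp_apply_eq_fderiv]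
  ring

theorem fderiv_apply_self_mul_eq_sum {E ι : Type*} [NormedAddCommGroup E] [InnerProductSpace ℝ E]
    [Fintype ι] (b : OrthonormalBasis ι ℝ E) (f : 𝓢(E, ℝ)) (g : E → ℝ) (x : E) :
    fderiv ℝ f x x * g x = ∑ j, innerSL ℝ (b j) x * (g x * ∂_{b j} f x) := by
  rw [← congrArg (fderiv ℝ f x) (b.sum_repr' x)]
  simp only [map_sum, map_smul, smul_eq_mul, Finset.sum_mul, innerSL_apply_apply,
    lineDerivOp_apply_eq_fderiv]
  exact Finset.sum_congr rfl fun j _ ↦ by ring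

section Integrable

variable [MeasurableSpace D] [BorelSpace D] [SecondCountableTopology D] {μ : Measure D}
  [μ.HasTemperateGrowth]

theorem integrable_mul_of_hasTemperateGrowth {g : D → ℝ} (hg : g.HasTemperateGrowth)
    (f : 𝓢(D, ℝ)) : Integrable (fun x ↦ g x * f x) μ := by
  have h := (smulLeftCLM ℝ g f).integrable (μ := μ)
  rwa [smulLeftCLM_apply hg] at h

theorem integrable_mul (f g : 𝓢(D, ℝ)) : Integrable (fun x ↦ f x * g x) μ :=
  integrable_mul_of_hasTemperateGrowth f.hasTemperateGrowth g

theorem integrable_pow_succ (f : 𝓢(D, ℝ)) (n : ℕ) : Integrable (fun x ↦ f x ^ (n + 1)) μ := by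
  simpa only [Pi.pow_apply, ← pow_succ] using
    integrable_mul_of_hasTemperateGrowth (μ := μ) (f.hasTemperateGrowth.pow n) f

theorem integrable_clm_mul_mul_of_hasTemperateGrowth (ℓ : D →L[ℝ] ℝ) {g : D → ℝ}
    (hg : g.HasTemperateGrowth) (f : 𝓢(D, ℝ)) : Integrable (fun x ↦ ℓ x * (g x * f x)) μ := by
  simpa only [Pi.mul_apply, mul_assoc] using
    integrable_mul_of_hasTemperateGrowth (μ := μ) (ℓ.hasTemperateGrowth.mul hg) f

end Integrable

section LineDerivatives

variable [MeasurableSpace D] [BorelSpace D] [FiniteDimensional ℝ D] {μ : Measure D}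
  [μ.IsAddHaarMeasure]

theorem integral_clm_mul_lineDerivOp (ℓ : D →L[ℝ] ℝ) (u : 𝓢(D, ℝ)) (v : D) :
    ∫ x, ℓ x * ∂_{v} u x ∂μ = -(ℓ v * ∫ x, u x ∂μ) := by
  have hℓ := ℓ.hasTemperateGrowth
  have hibp := integral_mul_fderiv_eq_neg_fderiv_mul_of_integrable (μ := μ) (f := ℓ) (g := u)
    (v := v) (by simpa using (u.integrable (μ := μ)).const_mul (ℓ v))
    (integrable_mul_of_hasTemperateGrowth hℓ (∂_{v} u)) (integrable_mul_of_hasTemperateGrowth hℓ u)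
    (fun x _ ↦ ℓ.differentiableAt) (fun x _ ↦ u.differentiableAt)
  simp only [ContinuousLinearMap.fderiv, integral_const_mul] at hibp
  exact hibp

theorem integral_clm_mul_lineDerivOp_mul (ℓ : D →L[ℝ] ℝ) (f g : 𝓢(D, ℝ)) (v : D) :
    ∫ x, ℓ x * (∂_{v} f x * g x) ∂μ =
      -(ℓ v * ∫ x, f x * g x ∂μ) - ∫ x, ℓ x * (f x * ∂_{v} g x) ∂μ := by
  have h := integral_clm_mul_lineDerivOp (μ := μ) ℓ (pairing (ContinuousLinearMap.mul ℝ ℝ) f g) v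
  simp only [lineDerivOp_pairing_mul_apply, pairing_apply_apply, ContinuousLinearMap.mul_apply',
    mul_add] at h
  rw [integral_add (integrable_clm_mul_mul_of_hasTemperateGrowth ℓ (hasTemperateGrowth _) _)
    (integrable_clm_mul_mul_of_hasTemperateGrowth ℓ (hasTemperateGrowth _) _)] at h
  linarith

theorem integral_clm_mul_pow_mul_lineDerivOp (ℓ : D →L[ℝ] ℝ) (f : 𝓢(D, ℝ)) (n : ℕ) (v : D) :
    ∫ x, ℓ x * (f x ^ n * ∂_{v} f x) ∂μ = -(ℓ v / (n + 1) * ∫ x, f x ^ (n + 1) ∂μ) := by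
  have h := integral_clm_mul_lineDerivOp (μ := μ) ℓ (smulLeftCLM ℝ (⇑f ^ n) f) v
  simp only [lineDerivOp_smulLeftCLM_pow_apply,
    smulLeftCLM_apply_apply (f.hasTemperateGrowth.pow n), Pi.pow_apply, smul_eq_mul, ← pow_succ,
    mul_left_comm (ℓ _) ((n : ℝ) + 1), integral_const_mul] at h
  rw [div_mul_eq_mul_div, ← neg_div, eq_div_iff (by positivity), ← h, mul_comm]

theorem integral_clm_mul_lineDerivOp_lineDerivOp_mul_lineDerivOp (ℓ : D →L[ℝ] ℝ) (f : 𝓢(D, ℝ))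
    (v w : D) :
    ∫ x, ℓ x * (∂_{v} (∂_{v} f) x * ∂_{w} f x) ∂μ =
      -(ℓ v * ∫ x, ∂_{v} f x * ∂_{w} f x ∂μ) + ℓ w / 2 * ∫ x, ∂_{v} f x ^ 2 ∂μ := by
  have h := integral_clm_mul_pow_mul_lineDerivOp (μ := μ) ℓ (∂_{v} f) 1 w
  rw [lineDerivOp_comm f w v] at h
  simp only [pow_one] at h
  rw [integral_clm_mul_lineDerivOp_mul, h]
  ring

end LineDerivatives

section Laplacian

variable {E : Type*} [NormedAddCommGroup E] [InnerProductSpace ℝ E] [FiniteDimensional ℝ E]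
  [MeasurableSpace E] [BorelSpace E] {μ : Measure E} [μ.IsAddHaarMeasure]

open Module

theorem integral_norm_gradient_sq {ι : Type*} [Fintype ι] (b : OrthonormalBasis ι ℝ E)
    (f : 𝓢(E, ℝ)) : ∫ x, ‖∇ f x‖ ^ 2 ∂μ = ∑ i, ∫ x, ∂_{b i} f x ^ 2 ∂μ := by
  simp_rw [norm_gradient_sq_eq_sum b]
  refine integral_finsetSum _ fun i _ ↦ ?_
  simp only [sq]
  exact integrable_mul (∂_{b i} f) (∂_{b i} f)

theorem integral_mul_laplacian_self (f : 𝓢(E, ℝ)) :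
    ∫ x, f x * Δ f x ∂μ = -∫ x, ‖∇ f x‖ ^ 2 ∂μ := by
  let b := stdOrthonormalBasis ℝ E
  simp_rw [laplacian_eq_sum b, sum_apply, Finset.mul_sum]
  rw [integral_finsetSum, integral_norm_gradient_sq b, ← Finset.sum_neg_distrib]
  · refine Finset.sum_congr rfl fun i _ ↦ ?_
    simp only [integral_mul_lineDerivOp_right_eq_neg_left, sq]
  · exact fun i _ ↦ integrable_mul f (∂_{b i} (∂_{b i} f))

theorem integrable_fderiv_apply_self_mul (f : 𝓢(E, ℝ)) {g : E → ℝ} (hg : g.HasTemperateGrowth) :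
    Integrable (fun x ↦ fderiv ℝ f x x * g x) μ := by
  let b := stdOrthonormalBasis ℝ E
  simp_rw [fderiv_apply_self_mul_eq_sum b]
  exact integrable_finsetSum _ fun j _ ↦
    integrable_clm_mul_mul_of_hasTemperateGrowth _ hg (∂_{b j} f)

theorem integral_fderiv_apply_self_mul {ι : Type*} [Fintype ι] (b : OrthonormalBasis ι ℝ E)
    (f : 𝓢(E, ℝ)) {g : E → ℝ} (hg : g.HasTemperateGrowth) :
    ∫ x, fderiv ℝ f x x * g x ∂μ = ∑ j, ∫ x, innerSL ℝ (b j) x * (g x * ∂_{b j} f x) ∂μ := by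
  simp_rw [fderiv_apply_self_mul_eq_sum b]
  exact integral_finsetSum _ fun j _ ↦
    integrable_clm_mul_mul_of_hasTemperateGrowth _ hg (∂_{b j} f)

theorem integral_fderiv_apply_self_mul_pow (f : 𝓢(E, ℝ)) (n : ℕ) :
    ∫ x, fderiv ℝ f x x * f x ^ n ∂μ = -(finrank ℝ E / (n + 1) * ∫ x, f x ^ (n + 1) ∂μ) := by
  let b := stdOrthonormalBasis ℝ E
  have h := integral_fderiv_apply_self_mul (μ := μ) b f (f.hasTemperateGrowth.pow n)
  simp only [Pi.pow_apply, integral_clm_mul_pow_mul_lineDerivOp] at h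
  rw [h]
  simp only [coe_innerSL_apply, real_inner_self_eq_norm_sq, b.orthonormal.1, one_pow,
    Finset.sum_neg_distrib, Finset.sum_const, Finset.card_univ, Fintype.card_fin, nsmul_eq_mul]
  ring

theorem integral_fderiv_apply_self_mul_laplacian (f : 𝓢(E, ℝ)) :
    ∫ x, fderiv ℝ f x x * Δ f x ∂μ = (finrank ℝ E / 2 - 1) * ∫ x, ‖∇ f x‖ ^ 2 ∂μ := by
  let b := stdOrthonormalBasis ℝ E
  have hterm (j : Fin (finrank ℝ E)) :
      ∫ x, innerSL ℝ (b j) x * (Δ f x * ∂_{b j} f x) ∂μ =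
        -∫ x, ∂_{b j} f x ^ 2 ∂μ + 1 / 2 * ∑ i, ∫ x, ∂_{b i} f x ^ 2 ∂μ := by
    simp_rw [laplacian_eq_sum b, sum_apply, Finset.sum_mul, Finset.mul_sum]
    rw [integral_finsetSum _ fun i _ ↦
      integrable_clm_mul_mul_of_hasTemperateGrowth _ (hasTemperateGrowth _) _]
    simp only [integral_clm_mul_lineDerivOp_lineDerivOp_mul_lineDerivOp]
    simp [b.inner_eq_ite, Finset.sum_add_distrib, sq]
  rw [integral_fderiv_apply_self_mul b f (Δ f).hasTemperateGrowth, integral_norm_gradient_sq b]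
  simp only [hterm, Finset.sum_add_distrib, Finset.sum_neg_distrib, Finset.sum_const]
  simp only [Finset.card_univ, Fintype.card_fin, nsmul_eq_mul]
  ring

end Laplacian

end SchwartzMap

open Module SchwartzMap

variable {E : Type*} [NormedAddCommGroup E] [InnerProductSpace ℝ E] [FiniteDimensional ℝ E]
  [MeasurableSpace E] [BorelSpace E] {μ : Measure E} [μ.IsAddHaarMeasure]

theorem nehari_identity (Q : 𝓢(E, ℝ)) (n : ℕ) (hQ : ∀ x, -Q x + Δ Q x + Q x ^ n = 0) :
    ∫ x, Q x ^ (n + 1) ∂μ = ∫ x, Q x ^ 2 ∂μ + ∫ x, ‖∇ Q x‖ ^ 2 ∂μ := by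
  have h : ∫ x, Q x * Δ Q x ∂μ = ∫ x, (Q x ^ (1 + 1) - Q x ^ (n + 1)) ∂μ :=
    integral_congr_ae (ae_of_all _ fun x ↦ by linear_combination Q x * hQ x)
  rw [integral_sub (integrable_pow_succ Q 1) (integrable_pow_succ Q n),
    integral_mul_laplacian_self] at h
  linarith

theorem pohozhaev_identity (Q : 𝓢(E, ℝ)) (n : ℕ) (hQ : ∀ x, -Q x + Δ Q x + Q x ^ n = 0) :
    finrank ℝ E / 2 * ∫ x, Q x ^ 2 ∂μ + (finrank ℝ E / 2 - 1) * ∫ x, ‖∇ Q x‖ ^ 2 ∂μ =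
      finrank ℝ E / (n + 1) * ∫ x, Q x ^ (n + 1) ∂μ := by
  have h : ∫ x, fderiv ℝ Q x x * Δ Q x ∂μ =
      ∫ x, (fderiv ℝ Q x x * Q x ^ 1 - fderiv ℝ Q x x * Q x ^ n) ∂μ :=
    integral_congr_ae (ae_of_all _ fun x ↦ by linear_combination fderiv ℝ Q x x * hQ x)
  rw [integral_sub
      (integrable_fderiv_apply_self_mul Q (g := (Q · ^ 1)) (Q.hasTemperateGrowth.pow 1))
      (integrable_fderiv_apply_self_mul Q (g := (Q · ^ n)) (Q.hasTemperateGrowth.pow n)),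
    integral_fderiv_apply_self_mul_laplacian, integral_fderiv_apply_self_mul_pow,
    integral_fderiv_apply_self_mul_pow] at h
  norm_num at h
  linarith

theorem lap_eq_laplacian (f : 𝓢(R3, ℝ)) (x : R3) : lap (fun y ↦ f y) x = Δ f x := by
  rw [laplacian_eq_sum (EuclideanSpace.basisFun (Fin 3) ℝ), sum_apply]
  simp only [EuclideanSpace.basisFun_apply]
  rfl

/-- Pohozhaev identities for a Schwartz solution of `-Q + ΔQ + Q³ = 0`:
`∫ Q⁴ = 4 ∫ Q²` and `∫ |∇Q|² = 3 ∫ Q²`. -/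
theorem pohozhaev_identities (Q : SchwartzMap R3 ℝ)
    (hQ : ∀ x : R3, -Q x + lap (fun y => Q y) x + (Q x) ^ 3 = 0) :
    (∫ x : R3, (Q x) ^ 4) = 4 * ∫ x : R3, (Q x) ^ 2 ∧
    (∫ x : R3, ‖gradient (fun y => Q y) x‖ ^ 2) = 3 * ∫ x : R3, (Q x) ^ 2 := by
  have hQΔ (x : R3) : -Q x + Δ Q x + Q x ^ 3 = 0 := lap_eq_laplacian Q x ▸ hQ x
  have nehari := nehari_identity (μ := volume) Q 3 hQΔ
  have pohozhaev := pohozhaev_identity (μ := volume) Q 3 hQΔ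
  rw [finrank_euclideanSpace_fin] at pohozhaev
  norm_num at nehari pohozhaev
  constructor <;> linarith
end
end

section
/- Let y : [0,∞) → ℝ be a C² function with y(t) > 0, y'(t) > 0 and y''(t) < 0 for all t ≥ 0, and suppose there is a constant C > 0 such that (y'(t))² ≤ C·y(t)·(y''(t))² for all t ≥ 0. Then: (a) y is bounded on [0,∞), with √(y(t)) ≤ √(y(0)) + √C·y'(0) for all t; (b) there exist constants C', c > 0 such that y'(t) ≤ C'e^{-ct} for all t ≥ 0. -/
/-!
Writing `s = √C`, the hypothesis says `y' ≤ s √y (-y'')`, i.e. `y'/√y + s y'' ≤ 0`, so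
`2√y + s y'` is nonincreasing; as `y' > 0` this bounds `√y` by `M = √(y 0) + s y'(0)`.
Feeding the bound back in gives `y' ≤ -(s M) y''`, so `y' · exp(t / (s M))` is nonincreasing,
which is the exponential decay of `y'`.
-/

open Real Set

theorem le_sqrt_mul_sqrt_mul_abs_of_sq_le {a b x C : ℝ} (hC : 0 ≤ C) (ha : 0 ≤ a)
    (h : a ^ 2 ≤ C * x * b ^ 2) : a ≤ √C * √x * |b| := by
  calc a = √(a ^ 2) := (sqrt_sq ha).symm
    _ ≤ √(C * x * b ^ 2) := sqrt_le_sqrt h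
    _ = √C * √x * |b| := by rw [sqrt_mul' _ (sq_nonneg b), sqrt_mul hC, sqrt_sq_eq_abs]

theorem antitoneOn_Ici_of_hasDerivAt_nonpos {f f' : ℝ → ℝ} {a : ℝ}
    (hf : ∀ t ≥ a, HasDerivAt f (f' t) t) (hf' : ∀ t > a, f' t ≤ 0) : AntitoneOn f (Ici a) := by
  refine antitoneOn_of_hasDerivWithinAt_nonpos (f' := f') (convex_Ici a)
    (fun t ht => (hf t ht).continuousAt.continuousWithinAt) (fun t ht => ?_) (fun t ht => ?_) <;>
    simp only [interior_Ici, mem_Ioi] at ht ⊢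
  · exact (hf t ht.le).hasDerivWithinAt
  · exact hf' t ht

theorem antitoneOn_two_mul_sqrt_add_mul_deriv {y y' y'' : ℝ → ℝ} {a s : ℝ}
    (hy : ∀ t ≥ a, HasDerivAt y (y' t) t) (hy' : ∀ t ≥ a, HasDerivAt y' (y'' t) t)
    (hpos : ∀ t ≥ a, 0 < y t) (hle : ∀ t ≥ a, y' t ≤ s * √(y t) * -y'' t) :
    AntitoneOn (fun t => 2 * √(y t) + s * y' t) (Ici a) := by
  refine antitoneOn_Ici_of_hasDerivAt_nonpos (f' := fun t => y' t / √(y t) + s * y'' t)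
    (fun t ht => ?_) (fun t ht => ?_)
  · refine ((((hy t ht).sqrt (hpos t ht).ne').const_mul 2).add
      ((hy' t ht).const_mul s)).congr_deriv ?_
    ring
  · have hsqrt : 0 < √(y t) := sqrt_pos.2 (hpos t ht.le)
    rw [div_add' _ _ _ hsqrt.ne']
    exact div_nonpos_of_nonpos_of_nonneg (by nlinarith [hle t ht.le]) hsqrt.le

theorem le_mul_exp_of_mul_le_neg_deriv {u u' : ℝ → ℝ} {a c : ℝ}
    (hu : ∀ t ≥ a, HasDerivAt u (u' t) t) (hle : ∀ t ≥ a, c * u t ≤ -u' t) :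
    ∀ t ≥ a, u t ≤ u a * exp (-c * (t - a)) := by
  have hanti : AntitoneOn (fun t => u t * exp (c * t)) (Ici a) := by
    refine antitoneOn_Ici_of_hasDerivAt_nonpos
      (f' := fun t => u' t * exp (c * t) + u t * (exp (c * t) * c)) (fun t ht => ?_) (fun t ht => ?_)
    · exact (hu t ht).mul (by simpa using ((hasDerivAt_id t).const_mul c).exp)
    · nlinarith [hle t ht.le, exp_pos (c * t)]
  intro t ht
  have h := hanti self_mem_Ici ht ht
  rw [show -c * (t - a) = c * a - c * t by ring, exp_sub, mul_div_assoc', le_div_iff₀ (exp_pos _)]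
  exact h

/-- Let `y` be `C²` with `y > 0`, `y' > 0`, `y'' < 0` on `[0,∞)` and
`(y')² ≤ C·y·(y'')²`. Then (a) `√(y(t)) ≤ √(y(0)) + √C·y'(0)` for all `t ≥ 0`, and
(b) `y'` decays exponentially. -/
theorem virial_exponential_decay (y : ℝ → ℝ) (C : ℝ) (hC : 0 < C)
    (hy : ContDiff ℝ 2 y)
    (hpos : ∀ t ≥ (0 : ℝ), 0 < y t)
    (hy' : ∀ t ≥ (0 : ℝ), 0 < deriv y t)
    (hy'' : ∀ t ≥ (0 : ℝ), deriv (deriv y) t < 0)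
    (hCS : ∀ t ≥ (0 : ℝ), (deriv y t) ^ 2 ≤ C * y t * (deriv (deriv y) t) ^ 2) :
    (∀ t ≥ (0 : ℝ), Real.sqrt (y t) ≤ Real.sqrt (y 0) + Real.sqrt C * deriv y 0) ∧
    ∃ C' c : ℝ, 0 < C' ∧ 0 < c ∧ ∀ t ≥ (0 : ℝ), deriv y t ≤ C' * Real.exp (-c * t) := by
  have hd1 : ∀ t, HasDerivAt y (deriv y t) t :=
    fun t => ((hy.differentiable two_ne_zero) t).hasDerivAt
  have hd2 : ∀ t, HasDerivAt (deriv y) (deriv (deriv y) t) t :=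
    fun t => ((hy.iterate_deriv' 1 1).differentiable one_ne_zero t).hasDerivAt
  have hle : ∀ t ≥ (0 : ℝ), deriv y t ≤ √C * √(y t) * -deriv (deriv y) t := fun t ht => by
    simpa [abs_of_neg (hy'' t ht)] using
      le_sqrt_mul_sqrt_mul_abs_of_sq_le hC.le (hy' t ht).le (hCS t ht)
  have hanti := antitoneOn_two_mul_sqrt_add_mul_deriv (fun t _ => hd1 t) (fun t _ => hd2 t) hpos hle
  have hbound : ∀ t ≥ (0 : ℝ), √(y t) ≤ √(y 0) + √C * deriv y 0 := fun t ht => by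
    have := hanti self_mem_Ici ht ht
    nlinarith [hy' t ht, hy' 0 le_rfl, sqrt_pos.2 hC]
  set K := √C * (√(y 0) + √C * deriv y 0)
  have hK : 0 < K := by have := hy' 0 le_rfl; have := hpos 0 le_rfl; positivity
  have hdecay : ∀ t ≥ (0 : ℝ), K⁻¹ * deriv y t ≤ -deriv (deriv y) t := fun t ht => by
    rw [inv_mul_le_iff₀ hK]
    nlinarith [hle t ht, mul_le_mul_of_nonneg_left (hbound t ht) (sqrt_nonneg C), hy'' t ht]
  refine ⟨hbound, deriv y 0, K⁻¹, hy' 0 le_rfl, inv_pos.2 hK, fun t ht => ?_⟩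
  simpa using le_mul_exp_of_mul_le_neg_deriv (fun t _ => hd2 t) hdecay t ht
end

section
/- Let e₀, γ₂ > 0, t₀ ∈ ℝ, and let α : [t₀,∞) → ℝ be a C¹ bounded function satisfying |α'(t) − e₀α(t)| ≤ C e^{-γ₂t} for all t ≥ t₀. Then |α(t)| ≤ (C/γ₂) e^{-γ₂t} for all t ≥ t₀. -/
/-!
The weighted function `g t = e^{-e₀ t} α t` tends to `0` because `α` is bounded, and
`|g'(t)| = e^{-e₀ t} |α'(t) - e₀ α(t)| ≤ C e^{-(e₀+γ₂) t}`. Integrating from `t` to `∞`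
gives `|g t| ≤ C/(e₀+γ₂) · e^{-(e₀+γ₂) t}`; multiplying back by `e^{e₀ t}` yields the bound,
even with the better constant `C/(e₀+γ₂)`. The integration is done without integrals:
`F ∓ g` is antitone and tends to `0`, hence is nonnegative, where `F` is the majorant.
-/

open Filter Topology Set Real

theorem nonneg_of_tendsto_zero_of_hasDerivAt_nonpos {u u' : ℝ → ℝ} {t₀ : ℝ}
    (hu : ∀ t ≥ t₀, HasDerivAt u (u' t) t) (hu' : ∀ t ≥ t₀, u' t ≤ 0)
    (hlim : Tendsto u atTop (𝓝 0)) : ∀ t ≥ t₀, 0 ≤ u t := by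
  have hanti : AntitoneOn u (Ici t₀) :=
    antitoneOn_of_hasDerivWithinAt_nonpos (convex_Ici t₀)
      (fun t ht => (hu t ht).continuousAt.continuousWithinAt)
      (fun t ht => (hu t (interior_subset ht)).hasDerivWithinAt)
      (fun t ht => hu' t (interior_subset ht))
  intro t ht
  refine le_of_tendsto hlim ?_
  filter_upwards [eventually_ge_atTop t] with s hs
  exact hanti ht (ht.trans hs) hs

theorem abs_le_of_tendsto_zero_of_abs_deriv_le {f f' F F' : ℝ → ℝ} {t₀ : ℝ}
    (hf : ∀ t ≥ t₀, HasDerivAt f (f' t) t) (hF : ∀ t ≥ t₀, HasDerivAt F (F' t) t)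
    (hf_lim : Tendsto f atTop (𝓝 0)) (hF_lim : Tendsto F atTop (𝓝 0))
    (hle : ∀ t ≥ t₀, |f' t| ≤ -F' t) : ∀ t ≥ t₀, |f t| ≤ F t := by
  have hsub := nonneg_of_tendsto_zero_of_hasDerivAt_nonpos (u := fun t => F t - f t)
    (fun t ht => (hF t ht).sub (hf t ht))
    (fun t ht => by linarith [neg_abs_le (f' t), hle t ht])
    (by simpa using hF_lim.sub hf_lim)
  have hadd := nonneg_of_tendsto_zero_of_hasDerivAt_nonpos (u := fun t => F t + f t)
    (fun t ht => (hF t ht).add (hf t ht))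
    (fun t ht => by linarith [le_abs_self (f' t), hle t ht])
    (by simpa using hF_lim.add hf_lim)
  intro t ht
  exact abs_le.2 ⟨by linarith [hadd t ht], by linarith [hsub t ht]⟩

theorem tendsto_exp_neg_mul_atTop_nhds_zero {c : ℝ} (hc : 0 < c) :
    Tendsto (fun t => exp (-c * t)) atTop (𝓝 0) :=
  tendsto_exp_atBot.comp (tendsto_id.const_mul_atTop_of_neg (neg_neg_of_pos hc))

theorem hasDerivAt_exp_neg_mul_mul {α : ℝ → ℝ} {a α' t : ℝ} (hα : HasDerivAt α α' t) :
    HasDerivAt (fun s => exp (-a * s) * α s) (exp (-a * t) * (α' - a * α t)) t := by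
  have hexp : HasDerivAt (fun s => exp (-a * s)) (exp (-a * t) * (-a * 1)) t :=
    ((hasDerivAt_id t).const_mul (-a)).exp
  exact (hexp.mul hα).congr_deriv (by ring)

theorem hasDerivAt_const_mul_exp_neg_mul {a : ℝ} (C : ℝ) (ha : a ≠ 0) (t : ℝ) :
    HasDerivAt (fun s => C / a * exp (-a * s)) (-(C * exp (-a * t))) t := by
  have hexp : HasDerivAt (fun s => exp (-a * s)) (exp (-a * t) * (-a * 1)) t :=
    ((hasDerivAt_id t).const_mul (-a)).exp
  exact (hexp.const_mul (C / a)).congr_deriv (by field_simp)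

theorem tendsto_exp_neg_mul_mul_of_bounded {α : ℝ → ℝ} {a t₀ M : ℝ} (ha : 0 < a)
    (hM : ∀ t ≥ t₀, |α t| ≤ M) : Tendsto (fun t => exp (-a * t) * α t) atTop (𝓝 0) :=
  (tendsto_exp_neg_mul_atTop_nhds_zero ha).zero_mul_isBoundedUnder_le
    (isBoundedUnder_of_eventually_le (a := M) (eventually_ge_atTop t₀ |>.mono hM))

theorem abs_le_of_abs_deriv_sub_mul_le {α : ℝ → ℝ} {a γ t₀ C : ℝ} (ha : 0 < a)
    (hγ : 0 < a + γ) (hα : Differentiable ℝ α) (hbdd : ∃ M : ℝ, ∀ t ≥ t₀, |α t| ≤ M)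
    (hineq : ∀ t ≥ t₀, |deriv α t - a * α t| ≤ C * exp (-γ * t)) :
    ∀ t ≥ t₀, |α t| ≤ C / (a + γ) * exp (-γ * t) := by
  obtain ⟨M, hM⟩ := hbdd
  have hweighted := abs_le_of_tendsto_zero_of_abs_deriv_le (t₀ := t₀)
    (fun t _ => hasDerivAt_exp_neg_mul_mul (hα t).hasDerivAt)
    (fun t _ => hasDerivAt_const_mul_exp_neg_mul C hγ.ne' t)
    (tendsto_exp_neg_mul_mul_of_bounded ha hM)
    ((tendsto_exp_neg_mul_atTop_nhds_zero hγ).const_mul (C / (a + γ)) |>.trans (by simp))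
    (fun t ht => by
      rw [neg_neg, abs_mul, abs_of_pos (exp_pos _)]
      calc exp (-a * t) * |deriv α t - a * α t|
          ≤ exp (-a * t) * (C * exp (-γ * t)) := by gcongr; exact hineq t ht
        _ = C * exp (-(a + γ) * t) := by rw [neg_add, add_mul, exp_add]; ring)
  intro t ht
  have h := hweighted t ht
  rw [abs_mul, abs_of_pos (exp_pos _)] at h
  calc |α t| = exp (a * t) * (exp (-a * t) * |α t|) := by
        rw [← mul_assoc, ← exp_add]; simp
    _ ≤ exp (a * t) * (C / (a + γ) * exp (-(a + γ) * t)) := by gcongr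
    _ = C / (a + γ) * exp (-γ * t) := by
        rw [mul_left_comm, ← exp_add]; ring_nf

theorem unstable_mode_decay_general (e₀ γ₂ t₀ C : ℝ) (he₀ : 0 < e₀) (hγ : 0 < γ₂)
    (α : ℝ → ℝ) (hα : ContDiff ℝ 1 α)
    (hbdd : ∃ M : ℝ, ∀ t ≥ t₀, |α t| ≤ M)
    (hineq : ∀ t ≥ t₀, |deriv α t - e₀ * α t| ≤ C * Real.exp (-γ₂ * t)) :
    ∀ t ≥ t₀, |α t| ≤ (C / γ₂) * Real.exp (-γ₂ * t) := by
  have hC : 0 ≤ C :=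
    nonneg_of_mul_nonneg_left ((abs_nonneg _).trans (hineq t₀ le_rfl)) (exp_pos _)
  intro t ht
  calc |α t| ≤ C / (e₀ + γ₂) * exp (-γ₂ * t) :=
        abs_le_of_abs_deriv_sub_mul_le he₀ (by positivity) (hα.differentiable one_ne_zero)
          hbdd hineq t ht
    _ ≤ C / γ₂ * exp (-γ₂ * t) := by gcongr; linarith

/-- If `α` is bounded, `C¹`, and `|α'(t) − e₀α(t)| ≤ C e^{-γ₂t}` for `t ≥ t₀`
with `e₀, γ₂ > 0`, then `|α(t)| ≤ (C/γ₂) e^{-γ₂t}` for all `t ≥ t₀`. -/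
theorem unstable_mode_decay (e₀ γ₂ t₀ C : ℝ) (he₀ : 0 < e₀) (hγ : 0 < γ₂) (hC : 0 < C)
    (α : ℝ → ℝ) (hα : ContDiff ℝ 1 α)
    (hbdd : ∃ M : ℝ, ∀ t ≥ t₀, |α t| ≤ M)
    (hineq : ∀ t ≥ t₀, |deriv α t - e₀ * α t| ≤ C * Real.exp (-γ₂ * t)) :
    ∀ t ≥ t₀, |α t| ≤ (C / γ₂) * Real.exp (-γ₂ * t) :=
  unstable_mode_decay_general e₀ γ₂ t₀ C he₀ hγ α hα hbdd hineq
end
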